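/- arXiv:math/9911084 — 4 statements merged into one kernel-verified Lean document; each statement's English description precedes it below -/
import Mathlib

section
/- Define v_p = p(p+1)/6 for natural numbers p, and let u(λ) = (6λ + 1 + √(24λ + 1))/6. Then for every natural number p, the p-fold iterate of u applied to 0 equals v_p, i.e., u^∘p(0) = p(p+1)/6. -/
noncomputable def u (lam : ℝ) : ℝ := (6 * lam + 1 + Real.sqrt (24 * lam + 1)) / 6

theorem iterate_u_zero (p : ℕ) : u^[p] 0 = (p * (p + 1) : ℝ) / 6 := by
  induction p with
  | zero => simp
  | succ n ih =>
    rw [Function.iterate_succ_apply', ih, u]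
    have h : (24 : ℝ) * ((n * (n + 1)) / 6) + 1 = (2 * n + 1) ^ 2 := by ring
    rw [h, Real.sqrt_sq (by positivity)]
    push_cast
    ring
end

section
/- Define U(λ) = √(24λ + 1) − 1 for λ ≥ 0, and u(λ) = (6λ + 1 + √(24λ + 1))/6. Then U is strictly increasing on [0,∞), and for all λ ≥ 0, U(u(λ)) = U(λ) + U(1/3). -/
noncomputable def U (lam : ℝ) : ℝ := Real.sqrt (24 * lam + 1) - 1

theorem U_strictMono_and_additive :
    StrictMonoOn U (Set.Ici (0 : ℝ)) ∧
    ∀ lam : ℝ, 0 ≤ lam → U (u lam) = U lam + U (1 / 3) := by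
  constructor
  · intro x hx y hy hxy
    simp only [U]
    have h1 : (0:ℝ) ≤ 24 * x + 1 := by
      have := hx; simp at this; nlinarith
    have : Real.sqrt (24 * x + 1) < Real.sqrt (24 * y + 1) :=
      Real.sqrt_lt_sqrt h1 (by linarith)
    linarith
  · intro lam hlam
    have hs : (0:ℝ) ≤ 24 * lam + 1 := by linarith
    have hsq : Real.sqrt (24 * lam + 1) ^ 2 = 24 * lam + 1 := Real.sq_sqrt hs
    have hsn : (0:ℝ) ≤ Real.sqrt (24 * lam + 1) := Real.sqrt_nonneg _
    have key : Real.sqrt (24 * u lam + 1) = Real.sqrt (24 * lam + 1) + 2 := by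
      have harg : 24 * u lam + 1 = (Real.sqrt (24 * lam + 1) + 2) ^ 2 := by
        simp only [u]; nlinarith
      rw [harg, Real.sqrt_sq (by linarith)]
    have h3 : Real.sqrt (24 * (1/3 : ℝ) + 1) = 3 := by
      rw [show (24 * (1/3 : ℝ) + 1) = 9 by norm_num,
        show (9:ℝ) = 3 ^ 2 by norm_num, Real.sqrt_sq (by norm_num)]
    simp only [U, key, h3]; ring
end

section
/- Let h₁(x) = x^(1/6 + b̂) · ₂F₁(1/6 + b̂, 1/2 + b̂, 1 + 2b̂; x) where b̂ = √(1+24b)/6 for b > 0 and ₂F₁ is the Gauss hypergeometric function given by its power series on (0,1). Then h₁ solves the ODE −2b·h(x) + 2x(1−2x)·h′(x) + 3x²(1−x)·h″(x) = 0 on the interval (0,1). -/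
/-- The Gauss hypergeometric function `₂F₁(a₀,a₁,a₂;x)` defined by its power
series, with `(a)ₙ` the (ascending) Pochhammer symbol. -/
noncomputable def hyp2F1 (a₀ a₁ a₂ x : ℝ) : ℝ :=
  ∑' n : ℕ, ((ascPochhammer ℝ n).eval a₀ * (ascPochhammer ℝ n).eval a₁) /
      ((ascPochhammer ℝ n).eval a₂ * (n.factorial : ℝ)) * x ^ n

open Filter Real Set

namespace H1ODE

noncomputable def co (a₀ a₁ a₂ : ℝ) (n : ℕ) : ℝ :=
  ((ascPochhammer ℝ n).eval a₀ * (ascPochhammer ℝ n).eval a₁) /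
      ((ascPochhammer ℝ n).eval a₂ * (n.factorial : ℝ))

variable {a₀ a₁ a₂ : ℝ}

lemma co_pos (h0 : 0 < a₀) (h1 : 0 < a₁) (h2 : 0 < a₂) (n : ℕ) : 0 < co a₀ a₁ a₂ n :=
  div_pos (mul_pos (ascPochhammer_pos n a₀ h0) (ascPochhammer_pos n a₁ h1))
    (mul_pos (ascPochhammer_pos n a₂ h2) (by exact_mod_cast n.factorial_pos))

lemma co_succ (h2 : 0 < a₂) (n : ℕ) :
    co a₀ a₁ a₂ (n + 1) = co a₀ a₁ a₂ n * ((a₀ + n) * (a₁ + n)) / ((a₂ + n) * (n + 1)) := by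
  have e2 : (ascPochhammer ℝ n).eval a₂ ≠ 0 := (ascPochhammer_pos n a₂ h2).ne'
  have e3 : (a₂ + n : ℝ) ≠ 0 := by positivity
  have e4 : ((n.factorial : ℝ)) ≠ 0 := by exact_mod_cast n.factorial_ne_zero
  have e5 : ((n : ℝ) + 1) ≠ 0 := by positivity
  unfold co
  rw [ascPochhammer_succ_eval, ascPochhammer_succ_eval, ascPochhammer_succ_eval,
    Nat.factorial_succ]
  push_cast
  field_simp

lemma tendsto_aux (p : ℝ) {q : ℝ} (hq : 0 < q) :
    Tendsto (fun n : ℕ => ((n : ℝ) + p) / ((n : ℝ) + q)) atTop (nhds 1) := by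
  have h1 : Tendsto (fun n : ℕ => (n : ℝ) + q) atTop atTop :=
    tendsto_atTop_add_const_right _ q tendsto_natCast_atTop_atTop
  have h2 : Tendsto (fun n : ℕ => (p - q) / ((n : ℝ) + q)) atTop (nhds 0) :=
    Tendsto.div_atTop tendsto_const_nhds h1
  have h3 : Tendsto (fun n : ℕ => 1 + (p - q) / ((n : ℝ) + q)) atTop (nhds (1 + 0)) :=
    tendsto_const_nhds.add h2
  rw [add_zero] at h3
  refine h3.congr fun n => ?_
  have : ((n : ℝ) + q) ≠ 0 := by positivity
  field_simp
  ring

lemma summable_master (h0 : 0 < a₀) (h1 : 0 < a₁) (h2 : 0 < a₂) {r : ℝ}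
    (hr0 : 0 < r) (hr1 : r < 1) :
    Summable (fun n : ℕ => co a₀ a₁ a₂ n * ((n : ℝ) + 1) ^ 3 * r ^ n) := by
  set f : ℕ → ℝ := fun n => co a₀ a₁ a₂ n * ((n : ℝ) + 1) ^ 3 * r ^ n with hf
  have fpos : ∀ n, 0 < f n := fun n => by
    have := co_pos h0 h1 h2 (a₂ := a₂) n; positivity
  apply summable_of_ratio_test_tendsto_lt_one hr1
    (Eventually.of_forall fun n => (fpos n).ne')
  have key : ∀ n : ℕ, ‖f (n + 1)‖ / ‖f n‖ =
      (((n : ℝ) + a₀) / ((n : ℝ) + a₂)) * (((n : ℝ) + a₁) / ((n : ℝ) + 1)) *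
        (((n : ℝ) + 2) / ((n : ℝ) + 1)) ^ 3 * r := by
    intro n
    rw [Real.norm_eq_abs, Real.norm_eq_abs, abs_of_pos (fpos _), abs_of_pos (fpos _), hf]
    simp only
    rw [co_succ h2 n]
    have c0 : co a₀ a₁ a₂ n ≠ 0 := (co_pos h0 h1 h2 n).ne'
    have e3 : (a₂ + n : ℝ) ≠ 0 := by positivity
    have e5 : ((n : ℝ) + 1) ≠ 0 := by positivity
    have e6 : (r : ℝ) ^ n ≠ 0 := by positivity
    push_cast
    field_simp
    ring
  have lim : Tendsto (fun n : ℕ => ‖f (n + 1)‖ / ‖f n‖) atTop (nhds (1 * 1 * 1 ^ 3 * r)) := by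
    refine Tendsto.congr (fun n => (key n).symm) ?_
    exact (((tendsto_aux a₀ h2).mul (tendsto_aux a₁ one_pos)).mul
      ((tendsto_aux 2 one_pos).pow 3)).mul tendsto_const_nhds
  simpa using lim

lemma pow_sub_le {r : ℝ} (hr0 : 0 < r) (hr1 : r < 1) (n k : ℕ) :
    r ^ (n - k) ≤ r ^ n / r ^ k := by
  rw [le_div_iff₀ (by positivity), ← pow_add]
  exact pow_le_pow_of_le_one hr0.le hr1.le (by omega)

noncomputable def G0 (a₀ a₁ a₂ : ℝ) (x : ℝ) : ℝ := ∑' n : ℕ, co a₀ a₁ a₂ n * x ^ n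
noncomputable def G1 (a₀ a₁ a₂ : ℝ) (x : ℝ) : ℝ :=
  ∑' n : ℕ, co a₀ a₁ a₂ n * ((n : ℝ) * x ^ (n - 1))
noncomputable def G2 (a₀ a₁ a₂ : ℝ) (x : ℝ) : ℝ :=
  ∑' n : ℕ, co a₀ a₁ a₂ n * ((n : ℝ) * (((n - 1 : ℕ) : ℝ) * x ^ (n - 2)))

section
variable (h0 : 0 < a₀) (h1 : 0 < a₁) (h2 : 0 < a₂)
include h0 h1 h2

/-- comparison against the master series -/
lemma summable_aux {r : ℝ} (hr0 : 0 < r) (hr1 : r < 1) {C : ℝ} {f : ℕ → ℝ}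
    (hf : ∀ n, ‖f n‖ ≤ co a₀ a₁ a₂ n * ((n : ℝ) + 1) ^ 3 * r ^ n * C) : Summable f :=
  Summable.of_norm_bounded ((summable_master h0 h1 h2 hr0 hr1).mul_right C) hf

-- the three basic pointwise bounds
lemma bound0 {r y : ℝ} (hr0 : 0 < r) (hy : |y| ≤ r) (n : ℕ) :
    ‖co a₀ a₁ a₂ n * y ^ n‖ ≤ co a₀ a₁ a₂ n * ((n : ℝ) + 1) ^ 3 * r ^ n * 1 := by
  have hc := co_pos h0 h1 h2 (a₂ := a₂) n
  rw [mul_one, norm_mul, norm_pow, Real.norm_eq_abs, Real.norm_eq_abs, abs_of_pos hc]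
  have h3 : |y| ^ n ≤ r ^ n := pow_le_pow_left₀ (abs_nonneg y) hy n
  have h4 : (1 : ℝ) ≤ ((n : ℝ) + 1) ^ 3 := by
    have h : (0:ℝ) ≤ (n : ℝ) := Nat.cast_nonneg n
    nlinarith [mul_nonneg (mul_nonneg h h) h, sq_nonneg ((n:ℝ))]
  calc co a₀ a₁ a₂ n * |y| ^ n ≤ co a₀ a₁ a₂ n * r ^ n :=
        mul_le_mul_of_nonneg_left h3 hc.le
    _ ≤ co a₀ a₁ a₂ n * ((n : ℝ) + 1) ^ 3 * r ^ n := by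
        rw [mul_assoc]
        refine mul_le_mul_of_nonneg_left ?_ hc.le
        have : (0:ℝ) ≤ r ^ n := by positivity
        nlinarith

lemma bound1 {r y : ℝ} (hr0 : 0 < r) (hr1 : r < 1) (hy : |y| ≤ r) (n : ℕ) :
    ‖co a₀ a₁ a₂ n * ((n : ℝ) * y ^ (n - 1))‖ ≤
      co a₀ a₁ a₂ n * ((n : ℝ) + 1) ^ 3 * r ^ n * (1 / r) := by
  have hc := co_pos h0 h1 h2 (a₂ := a₂) n
  have hn0 : (0:ℝ) ≤ (n : ℝ) := Nat.cast_nonneg n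
  rw [norm_mul, norm_mul, norm_pow, Real.norm_eq_abs, Real.norm_eq_abs, Real.norm_eq_abs,
    abs_of_pos hc, abs_of_nonneg hn0]
  have h3 : |y| ^ (n - 1) ≤ r ^ n / r := by
    calc |y| ^ (n - 1) ≤ r ^ (n - 1) := pow_le_pow_left₀ (abs_nonneg y) hy _
      _ ≤ r ^ n / r ^ 1 := pow_sub_le hr0 hr1 n 1
      _ = r ^ n / r := by rw [pow_one]
  have h4 : (n : ℝ) ≤ ((n : ℝ) + 1) ^ 3 := by
    nlinarith [mul_nonneg (mul_nonneg hn0 hn0) hn0, sq_nonneg ((n:ℝ))]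
  calc co a₀ a₁ a₂ n * ((n : ℝ) * |y| ^ (n - 1))
      ≤ co a₀ a₁ a₂ n * (((n : ℝ) + 1) ^ 3 * (r ^ n / r)) := by
        refine mul_le_mul_of_nonneg_left ?_ hc.le
        exact mul_le_mul h4 h3 (by positivity) (by positivity)
    _ = co a₀ a₁ a₂ n * ((n : ℝ) + 1) ^ 3 * r ^ n * (1 / r) := by ring

lemma bound2 {r y : ℝ} (hr0 : 0 < r) (hr1 : r < 1) (hy : |y| ≤ r) (n : ℕ) :
    ‖co a₀ a₁ a₂ n * ((n : ℝ) * (((n - 1 : ℕ) : ℝ) * y ^ (n - 2)))‖ ≤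
      co a₀ a₁ a₂ n * ((n : ℝ) + 1) ^ 3 * r ^ n * (1 / r ^ 2) := by
  have hc := co_pos h0 h1 h2 (a₂ := a₂) n
  have hn0 : (0:ℝ) ≤ (n : ℝ) := Nat.cast_nonneg n
  have hm0 : (0:ℝ) ≤ ((n - 1 : ℕ) : ℝ) := Nat.cast_nonneg _
  have hm1 : ((n - 1 : ℕ) : ℝ) ≤ (n : ℝ) := by exact_mod_cast Nat.sub_le n 1
  rw [norm_mul, norm_mul, norm_mul, norm_pow, Real.norm_eq_abs, Real.norm_eq_abs,
    Real.norm_eq_abs, Real.norm_eq_abs, abs_of_pos hc, abs_of_nonneg hn0, abs_of_nonneg hm0]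
  have h3 : |y| ^ (n - 2) ≤ r ^ n / r ^ 2 :=
    (pow_le_pow_left₀ (abs_nonneg y) hy _).trans (pow_sub_le hr0 hr1 n 2)
  have h4 : (n : ℝ) * ((n - 1 : ℕ) : ℝ) ≤ ((n : ℝ) + 1) ^ 3 := by
    nlinarith [mul_nonneg (mul_nonneg hn0 hn0) hn0, sq_nonneg ((n:ℝ)), mul_le_mul_of_nonneg_left hm1 hn0]
  calc co a₀ a₁ a₂ n * ((n : ℝ) * (((n - 1 : ℕ) : ℝ) * |y| ^ (n - 2)))
      ≤ co a₀ a₁ a₂ n * (((n : ℝ) + 1) ^ 3 * (r ^ n / r ^ 2)) := by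
        refine mul_le_mul_of_nonneg_left ?_ hc.le
        rw [← mul_assoc]
        exact mul_le_mul h4 h3 (by positivity) (by positivity)
    _ = co a₀ a₁ a₂ n * ((n : ℝ) + 1) ^ 3 * r ^ n * (1 / r ^ 2) := by ring

lemma hasDerivAt_G0 {x : ℝ} (hx : x ∈ Ioo (0:ℝ) 1) :
    HasDerivAt (G0 a₀ a₁ a₂) (G1 a₀ a₁ a₂ x) x := by
  set r : ℝ := (x + 1) / 2 with hr
  have hr0 : 0 < r := by simp only [hr]; linarith [hx.1]
  have hr1 : r < 1 := by simp only [hr]; linarith [hx.2]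
  have hxr : x ∈ Ioo (-r) r := by
    constructor <;> simp only [hr] <;> [linarith [hx.1]; linarith [hx.2]]
  exact hasDerivAt_tsum_of_isPreconnected
    ((summable_master h0 h1 h2 hr0 hr1).mul_right (1 / r)) isOpen_Ioo
    (isPreconnected_Ioo)
    (fun n y _ => (hasDerivAt_pow n y).const_mul (co a₀ a₁ a₂ n))
    (fun n y hy => bound1 h0 h1 h2 hr0 hr1 (le_of_lt (abs_lt.2 ⟨hy.1, hy.2⟩)) n)
    hxr
    (summable_aux h0 h1 h2 hr0 hr1 (fun n =>
      bound0 h0 h1 h2 hr0 (le_of_lt (abs_lt.2 ⟨hxr.1, hxr.2⟩)) n))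
    hxr

lemma hasDerivAt_G1 {x : ℝ} (hx : x ∈ Ioo (0:ℝ) 1) :
    HasDerivAt (G1 a₀ a₁ a₂) (G2 a₀ a₁ a₂ x) x := by
  set r : ℝ := (x + 1) / 2 with hr
  have hr0 : 0 < r := by simp only [hr]; linarith [hx.1]
  have hr1 : r < 1 := by simp only [hr]; linarith [hx.2]
  have hxr : x ∈ Ioo (-r) r := by
    constructor <;> simp only [hr] <;> [linarith [hx.1]; linarith [hx.2]]
  have hder : ∀ (n : ℕ) (y : ℝ), y ∈ Ioo (-r) r →
      HasDerivAt (fun z => co a₀ a₁ a₂ n * ((n : ℝ) * z ^ (n - 1)))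
        (co a₀ a₁ a₂ n * ((n : ℝ) * (((n - 1 : ℕ) : ℝ) * y ^ (n - 2)))) y := by
    intro n y _
    have h := (hasDerivAt_pow (n - 1) y).const_mul ((n : ℝ))
    have h2' : n - 1 - 1 = n - 2 := by omega
    rw [h2'] at h
    exact h.const_mul (co a₀ a₁ a₂ n)
  exact hasDerivAt_tsum_of_isPreconnected
    ((summable_master h0 h1 h2 hr0 hr1).mul_right (1 / r ^ 2)) isOpen_Ioo
    (isPreconnected_Ioo) hder
    (fun n y hy => bound2 h0 h1 h2 hr0 hr1 (le_of_lt (abs_lt.2 ⟨hy.1, hy.2⟩)) n)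
    hxr
    (summable_aux h0 h1 h2 hr0 hr1 (fun n =>
      bound1 h0 h1 h2 hr0 hr1 (le_of_lt (abs_lt.2 ⟨hxr.1, hxr.2⟩)) n))
    hxr

lemma key {x : ℝ} (hx : x ∈ Ioo (0:ℝ) 1) :
    x * (1 - x) * G2 a₀ a₁ a₂ x + (a₂ - (a₀ + a₁ + 1) * x) * G1 a₀ a₁ a₂ x
      - a₀ * a₁ * G0 a₀ a₁ a₂ x = 0 := by
  obtain ⟨hx0, hx1⟩ := hx
  have hax : |x| ≤ x := by rw [abs_of_pos hx0]
  -- summability of the three basic series at x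
  have sP : Summable (fun n : ℕ => co a₀ a₁ a₂ n * x ^ n) :=
    summable_aux h0 h1 h2 hx0 hx1 (bound0 h0 h1 h2 hx0 hax)
  have sQ : Summable (fun n : ℕ => co a₀ a₁ a₂ n * ((n : ℝ) * x ^ (n - 1))) :=
    summable_aux h0 h1 h2 hx0 hx1 (bound1 h0 h1 h2 hx0 hx1 hax)
  have sR : Summable (fun n : ℕ => co a₀ a₁ a₂ n * ((n : ℝ) * (((n - 1 : ℕ) : ℝ) * x ^ (n - 2)))) :=
    summable_aux h0 h1 h2 hx0 hx1 (bound2 h0 h1 h2 hx0 hx1 hax)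
  have hP : HasSum (fun n : ℕ => co a₀ a₁ a₂ n * x ^ n) (G0 a₀ a₁ a₂ x) := sP.hasSum
  have hQ : HasSum (fun n : ℕ => co a₀ a₁ a₂ n * ((n : ℝ) * x ^ (n - 1))) (G1 a₀ a₁ a₂ x) :=
    sQ.hasSum
  have hR : HasSum (fun n : ℕ => co a₀ a₁ a₂ n * ((n : ℝ) * (((n - 1 : ℕ) : ℝ) * x ^ (n - 2))))
      (G2 a₀ a₁ a₂ x) := sR.hasSum
  -- the shifted series
  set V : ℕ → ℝ := fun n => co a₀ a₁ a₂ n * (((n : ℝ) + a₀) * ((n : ℝ) + a₁)) * x ^ n with hV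
  have sV : Summable V := by
    refine summable_aux h0 h1 h2 hx0 hx1 (C := (1 + a₀) * (1 + a₁)) fun n => ?_
    have hc := co_pos h0 h1 h2 (a₂ := a₂) n
    have hn0 : (0:ℝ) ≤ (n : ℝ) := Nat.cast_nonneg n
    have hxn : (0:ℝ) < x ^ n := by positivity
    rw [Real.norm_eq_abs, abs_of_pos (by positivity)]
    have hfac : ((n : ℝ) + a₀) * ((n : ℝ) + a₁) ≤ ((n : ℝ) + 1) ^ 3 * ((1 + a₀) * (1 + a₁)) := by
      have e0 : (n : ℝ) + a₀ ≤ ((n : ℝ) + 1) * (1 + a₀) := by nlinarith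
      have e1 : (n : ℝ) + a₁ ≤ ((n : ℝ) + 1) * (1 + a₁) := by nlinarith
      have e2 : ((n : ℝ) + 1) ^ 2 ≤ ((n : ℝ) + 1) ^ 3 := by nlinarith
      have e3 := mul_le_mul e0 e1 (by positivity) (by positivity)
      have e4 : ((n : ℝ) + 1) ^ 2 * ((1 + a₀) * (1 + a₁)) ≤ ((n : ℝ) + 1) ^ 3 * ((1 + a₀) * (1 + a₁)) :=
        mul_le_mul_of_nonneg_right e2 (by positivity)
      nlinarith [e3, e4]
    calc co a₀ a₁ a₂ n * (((n : ℝ) + a₀) * ((n : ℝ) + a₁)) * x ^ n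
        ≤ co a₀ a₁ a₂ n * (((n : ℝ) + 1) ^ 3 * ((1 + a₀) * (1 + a₁))) * x ^ n := by
          refine mul_le_mul_of_nonneg_right (mul_le_mul_of_nonneg_left hfac hc.le) hxn.le
      _ = co a₀ a₁ a₂ n * ((n : ℝ) + 1) ^ 3 * x ^ n * ((1 + a₀) * (1 + a₁)) := by ring
  set S : ℝ := ∑' n, V n with hS
  have hVs : HasSum V S := sV.hasSum
  -- A series
  set A : ℕ → ℝ := fun n => co a₀ a₁ a₂ n * ((n : ℝ) * (((n : ℝ) - 1) + a₂)) * x ^ (n - 1)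
    with hA
  have hshift : ∀ n : ℕ, A (n + 1) = V n := by
    intro n
    have e3 : (a₂ + (n : ℝ)) ≠ 0 := by positivity
    have e5 : ((n : ℝ) + 1) ≠ 0 := by positivity
    simp only [hA, hV, co_succ h2 n, Nat.add_sub_cancel]
    push_cast
    field_simp
    ring
  have hAs : HasSum A S := by
    have h01 : HasSum (fun n : ℕ => A (n + 1)) S := hVs.congr_fun fun n => hshift n
    have h02 := (hasSum_nat_add_iff (f := A) 1).mp h01
    have hA0 : A 0 = 0 := by simp [hA]
    simpa [hA0] using h02
  have hW : HasSum (fun n => A n - V n) 0 := by simpa using hAs.sub hVs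
  -- the combined series
  have hcomb : HasSum (fun n : ℕ =>
      x * (1 - x) * (co a₀ a₁ a₂ n * ((n : ℝ) * (((n - 1 : ℕ) : ℝ) * x ^ (n - 2))))
      + (a₂ - (a₀ + a₁ + 1) * x) * (co a₀ a₁ a₂ n * ((n : ℝ) * x ^ (n - 1)))
      - a₀ * a₁ * (co a₀ a₁ a₂ n * x ^ n))
      (x * (1 - x) * G2 a₀ a₁ a₂ x + (a₂ - (a₀ + a₁ + 1) * x) * G1 a₀ a₁ a₂ x
        - a₀ * a₁ * G0 a₀ a₁ a₂ x) :=
    ((hR.mul_left _).add (hQ.mul_left _)).sub (hP.mul_left _)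
  have hterm : ∀ n : ℕ,
      x * (1 - x) * (co a₀ a₁ a₂ n * ((n : ℝ) * (((n - 1 : ℕ) : ℝ) * x ^ (n - 2))))
      + (a₂ - (a₀ + a₁ + 1) * x) * (co a₀ a₁ a₂ n * ((n : ℝ) * x ^ (n - 1)))
      - a₀ * a₁ * (co a₀ a₁ a₂ n * x ^ n) = A n - V n := by
    intro n
    match n with
    | 0 => simp [hA, hV]; ring
    | 1 => simp [hA, hV]; ring
    | (m + 2) =>
      simp only [hA, hV]
      have e1 : m + 2 - 1 = m + 1 := rfl
      have e2 : m + 2 - 2 = m := rfl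
      rw [e1, e2]
      push_cast
      ring
  have := (hcomb.congr_fun (fun n => (hterm n).symm)).unique hW
  exact this

end
end H1ODE

open H1ODE Set Filter Real in
/-- `h₁(x) = x^{1/6+b̂} ₂F₁(1/6+b̂, 1/2+b̂, 1+2b̂; x)` with `b̂ = √(1+24b)/6`
solves `−2b h + 2x(1−2x) h′ + 3x²(1−x) h″ = 0` on `(0,1)`. -/
theorem h1_solves_ODE (b : ℝ) (hb : 0 < b) :
    let bhat : ℝ := Real.sqrt (1 + 24 * b) / 6
    let h₁ : ℝ → ℝ := fun x =>
      x ^ ((1 : ℝ) / 6 + bhat) * hyp2F1 (1 / 6 + bhat) (1 / 2 + bhat) (1 + 2 * bhat) x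
    ∀ x ∈ Set.Ioo (0 : ℝ) 1,
      -2 * b * h₁ x + 2 * x * (1 - 2 * x) * deriv h₁ x
        + 3 * x ^ 2 * (1 - x) * deriv (deriv h₁) x = 0 := by
  intro bhat h₁ x hx
  have hbhat : bhat = Real.sqrt (1 + 24 * b) / 6 := rfl
  have hs0 : 0 < Real.sqrt (1 + 24 * b) := Real.sqrt_pos.2 (by linarith)
  have hbh : 0 < bhat := by rw [hbhat]; positivity
  set a₀ : ℝ := 1 / 6 + bhat with ha₀
  set a₁ : ℝ := 1 / 2 + bhat with ha₁
  set a₂ : ℝ := 1 + 2 * bhat with ha₂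
  have h0 : 0 < a₀ := by rw [ha₀]; linarith
  have h1 : 0 < a₁ := by rw [ha₁]; linarith
  have h2 : 0 < a₂ := by rw [ha₂]; linarith
  have hh₁ : h₁ = fun y => y ^ a₀ * G0 a₀ a₁ a₂ y := rfl
  -- first derivative
  have hD1 : ∀ y ∈ Ioo (0:ℝ) 1, HasDerivAt h₁
      (a₀ * y ^ (a₀ - 1) * G0 a₀ a₁ a₂ y + y ^ a₀ * G1 a₀ a₁ a₂ y) y := by
    intro y hy
    have hr := Real.hasDerivAt_rpow_const (x := y) (p := a₀) (Or.inl (ne_of_gt hy.1))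
    have := hr.mul (hasDerivAt_G0 h0 h1 h2 hy)
    rw [hh₁]
    exact this
  set D1 : ℝ → ℝ := fun y => a₀ * y ^ (a₀ - 1) * G0 a₀ a₁ a₂ y + y ^ a₀ * G1 a₀ a₁ a₂ y
    with hD1def
  have hderiv1 : ∀ y ∈ Ioo (0:ℝ) 1, deriv h₁ y = D1 y := fun y hy => (hD1 y hy).deriv
  -- second derivative
  have hEE : deriv h₁ =ᶠ[nhds x] D1 := by
    filter_upwards [Ioo_mem_nhds hx.1 hx.2] with y hy using hderiv1 y hy
  have hD2 : HasDerivAt D1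
      (a₀ * ((a₀ - 1) * x ^ (a₀ - 1 - 1)) * G0 a₀ a₁ a₂ x + a₀ * x ^ (a₀ - 1) * G1 a₀ a₁ a₂ x
        + (a₀ * x ^ (a₀ - 1) * G1 a₀ a₁ a₂ x + x ^ a₀ * G2 a₀ a₁ a₂ x)) x := by
    have hr1 := (Real.hasDerivAt_rpow_const (x := x) (p := a₀ - 1)
      (Or.inl (ne_of_gt hx.1))).const_mul a₀
    have hr2 := Real.hasDerivAt_rpow_const (x := x) (p := a₀) (Or.inl (ne_of_gt hx.1))
    exact ((hr1.mul (hasDerivAt_G0 h0 h1 h2 hx)).add (hr2.mul (hasDerivAt_G1 h0 h1 h2 hx)))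
  have hd2 : deriv (deriv h₁) x = a₀ * ((a₀ - 1) * x ^ (a₀ - 1 - 1)) * G0 a₀ a₁ a₂ x
      + a₀ * x ^ (a₀ - 1) * G1 a₀ a₁ a₂ x
      + (a₀ * x ^ (a₀ - 1) * G1 a₀ a₁ a₂ x + x ^ a₀ * G2 a₀ a₁ a₂ x) := by
    rw [hEE.deriv_eq]; exact hD2.deriv
  rw [hd2, hderiv1 x hx, hD1def, hh₁]
  simp only
  -- rpow manipulations
  have hu : x ^ a₀ = x * x ^ (a₀ - 1) := by
    nth_rewrite 1 [show a₀ = 1 + (a₀ - 1) by ring]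
    rw [Real.rpow_add hx.1, Real.rpow_one]
  have hu1 : x ^ (a₀ - 1) = x * x ^ (a₀ - 1 - 1) := by
    nth_rewrite 1 [show a₀ - 1 = 1 + (a₀ - 1 - 1) by ring]
    rw [Real.rpow_add hx.1, Real.rpow_one]
  rw [hu, hu1]
  have hKEY := key h0 h1 h2 hx
  have hsq : Real.sqrt (1 + 24 * b) ^ 2 = 1 + 24 * b := Real.sq_sqrt (by linarith)
  set F0 := G0 a₀ a₁ a₂ x
  set Fa := G1 a₀ a₁ a₂ x
  set Fb := G2 a₀ a₁ a₂ x
  set w := x ^ (a₀ - 1 - 1)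
  simp only [ha₀, ha₁, ha₂, hbhat] at hKEY ⊢
  linear_combination (3 * x ^ 3 * w) * hKEY + (x ^ 2 * w * F0 / 12) * hsq
end

section
/- Let b > 0, b̂ = √(1+24b)/6, and h₂(x) = x^(1/6 − b̂) · ₂F₁(1/6 − b̂, 1/2 − b̂, 1 − 2b̂; x) (assuming 1 − 2b̂ is not a nonpositive integer). Then h₂ solves the ODE −2b·h + 2x(1−2x)·h′ + 3x²(1−x)·h″ = 0 on (0,1), and lim_{x→0⁺} h₂(x) = +∞ while lim_{x→0⁺} h₁(x) = 0 where h₁(x) = x^(1/6+b̂)·₂F₁(1/6+b̂, 1/2+b̂, 1+2b̂; x). -/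
namespace Hyp

noncomputable def co (a b c : ℝ) (n : ℕ) : ℝ :=
  ((ascPochhammer ℝ n).eval a * (ascPochhammer ℝ n).eval b) /
      ((ascPochhammer ℝ n).eval c * (n.factorial : ℝ))

lemma hyp_eq (a b c x : ℝ) : hyp2F1 a b c x = ∑' n, co a b c n * x ^ n := rfl

variable {a b c : ℝ} (hc : ∀ n : ℕ, c + n ≠ 0)

lemma poch_succ (x : ℝ) (n : ℕ) :
    (ascPochhammer ℝ (n+1)).eval x = (ascPochhammer ℝ n).eval x * (x + n) := by
  rw [ascPochhammer_succ_eval]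

include hc in
lemma pochc_ne (n : ℕ) : (ascPochhammer ℝ n).eval c ≠ 0 := by
  induction n with
  | zero => simp
  | succ n ih => rw [poch_succ]; exact mul_ne_zero ih (hc n)

include hc in
lemma co_rec (n : ℕ) :
    co a b c (n+1) * ((c + n) * (n + 1)) = co a b c n * ((a + n) * (b + n)) := by
  have h1 := pochc_ne hc n
  have h2 : ((n+1).factorial : ℝ) ≠ 0 := Nat.cast_ne_zero.2 (Nat.factorial_ne_zero _)
  have h3 : (n.factorial : ℝ) ≠ 0 := Nat.cast_ne_zero.2 (Nat.factorial_ne_zero _)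
  rw [co, co, poch_succ, poch_succ, poch_succ, Nat.factorial_succ]
  push_cast
  rw [div_mul_eq_mul_div, div_mul_eq_mul_div, div_eq_div_iff ?h1 ?h2]
  · ring
  case h1 => exact mul_ne_zero (mul_ne_zero h1 (hc n)) (mul_ne_zero (by positivity) h3)
  case h2 => exact mul_ne_zero h1 h3

include hc in
lemma abs_co_succ (n : ℕ) :
    |co a b c (n+1)| = |co a b c n| * (|a + n| * |b + n| / (|c + n| * (n+1))) := by
  have h := co_rec hc (a := a) (b := b) n
  have hcn : |c + (n:ℝ)| ≠ 0 := abs_ne_zero.2 (hc n)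
  have hn1 : ((n:ℝ) + 1) ≠ 0 := by positivity
  have hpos : (0:ℝ) < (n:ℝ)+1 := by positivity
  rw [eq_comm, mul_div_assoc', div_eq_iff (mul_ne_zero hcn hpos.ne')]
  calc |co a b c n| * (|a + n| * |b + n|)
      = |co a b c n * ((a + n) * (b + n))| := by rw [abs_mul, abs_mul]
    _ = |co a b c (n+1) * ((c + n) * (n+1))| := by rw [h]
    _ = |co a b c (n+1)| * (|c + n| * ((n:ℝ)+1)) := by
        rw [abs_mul, abs_mul, abs_of_pos hpos]



open Filter Topology

lemma tendsto_ratio_aux (u v : ℝ) :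
    Tendsto (fun n : ℕ => (u + n) / (v + n)) atTop (𝓝 1) := by
  have h1 : Tendsto (fun n : ℕ => v + (n : ℝ)) atTop atTop :=
    tendsto_atTop_add_const_left _ v tendsto_natCast_atTop_atTop
  have h2 : Tendsto (fun n : ℕ => 1 + (u - v) / (v + n)) atTop (𝓝 1) := by
    have := (tendsto_const_nhds (x := u - v) (f := atTop (α := ℕ))).div_atTop h1
    simpa using (tendsto_const_nhds (x := (1:ℝ))).add this
  refine h2.congr' ?_
  filter_upwards [eventually_gt_atTop ⌈|v|⌉₊] with n hn
  have hv : |v| < (n : ℝ) := by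
    calc |v| ≤ ⌈|v|⌉₊ := Nat.le_ceil _
    _ < (n:ℝ) := by exact_mod_cast hn
  have hvn : (0:ℝ) < v + n := by
    have := neg_abs_le v; linarith
  field_simp
  ring

lemma tendsto_q :
    Tendsto (fun n : ℕ => |a + n| * |b + n| / (|c + n| * (n + 1))) atTop (𝓝 1) := by
  have h := (tendsto_ratio_aux a c).mul (tendsto_ratio_aux b 1)
  rw [mul_one] at h
  refine h.congr' ?_
  filter_upwards [eventually_gt_atTop ⌈|a| + |b| + |c|⌉₊] with n hn
  have hn' : |a| + |b| + |c| < (n:ℝ) := by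
    calc |a| + |b| + |c| ≤ ⌈|a| + |b| + |c|⌉₊ := Nat.le_ceil _
    _ < (n:ℝ) := by exact_mod_cast hn
  have ha : 0 < a + n := by have := neg_abs_le a; have := abs_nonneg b; have := abs_nonneg c; linarith
  have hb : 0 < b + n := by have := neg_abs_le b; have := abs_nonneg a; have := abs_nonneg c; linarith
  have hcp : 0 < c + n := by have := neg_abs_le c; have := abs_nonneg a; have := abs_nonneg b; linarith
  rw [div_mul_div_comm, abs_of_pos ha, abs_of_pos hb, abs_of_pos hcp]
  ring_nf

include hc in
lemma summable_co (g : ℕ → ℝ) (hg : ∀ n, 0 < g n)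
    (hgr : Tendsto (fun n => g (n + 1) / g n) atTop (𝓝 1)) (d : ℕ) {x : ℝ}
    (h0 : 0 ≤ x) (hx : x < 1) :
    Summable (fun n => g n * |co a b c (n + d)| * x ^ n) := by
  rcases eq_or_lt_of_le h0 with h | hxpos
  · apply summable_of_ne_finset_zero (s := {0})
    intro n hn
    have : x ^ n = 0 := by
      rw [← h, zero_pow]; simpa using hn
    simp [this]
  · set r := (1 + x) / 2 with hr
    have hr1 : r < 1 := by rw [hr]; linarith
    have hxr : x < r := by rw [hr]; linarith
    apply summable_of_ratio_norm_eventually_le hr1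
    have hfac : Tendsto
        (fun n : ℕ => g (n+1) / g n *
          (|a + (n+d)| * |b + (n+d)| / (|c + (n+d)| * ((n+d) + 1))) * x) atTop (𝓝 x) := by
      have hq : Tendsto (fun n : ℕ => |a + (n+d)| * |b + (n+d)| / (|c + (n+d)| * ((n+d) + 1)))
          atTop (𝓝 1) := by
        have := (tendsto_q (a := a) (b := b) (c := c)).comp (tendsto_add_atTop_nat d)
        refine this.congr fun n => ?_
        simp only [Function.comp_apply]
        push_cast
        ring_nf
      have := (hgr.mul hq).mul (tendsto_const_nhds (x := x))
      simpa using this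
    have hev : ∀ᶠ n : ℕ in atTop,
        g (n+1) / g n * (|a + (n+d)| * |b + (n+d)| / (|c + (n+d)| * ((n+d) + 1))) * x ≤ r :=
      hfac.eventually_le_const hxr
    filter_upwards [hev] with n hn
    have hnn : ∀ m : ℕ, 0 ≤ g m * |co a b c (m + d)| * x ^ m := fun m =>
      mul_nonneg (mul_nonneg (hg m).le (abs_nonneg _)) (pow_nonneg hxpos.le m)
    rw [Real.norm_of_nonneg (hnn (n+1)), Real.norm_of_nonneg (hnn n)]
    have hkey : g (n+1) * |co a b c (n + 1 + d)| * x ^ (n+1)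
        = (g n * |co a b c (n + d)| * x ^ n) *
          (g (n+1) / g n * (|a + (n+d)| * |b + (n+d)| / (|c + (n+d)| * ((n+d) + 1))) * x) := by
      have h1 : (n + 1 + d) = (n + d) + 1 := by omega
      have hgn : g n ≠ 0 := (hg n).ne'
      have h3 : |c + ((n:ℝ) + d)| ≠ 0 := by
        rw [abs_ne_zero]
        exact_mod_cast hc (n + d)
      have h4 : ((n:ℝ) + d + 1) ≠ 0 := by positivity
      rw [h1, abs_co_succ hc (n + d), pow_succ]
      push_cast
      field_simp
    rw [hkey]
    have hbase : 0 ≤ g n * |co a b c (n + d)| * x ^ n := hnn n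
    calc g n * |co a b c (n + d)| * x ^ n *
          (g (n+1) / g n * (|a + (n+d)| * |b + (n+d)| / (|c + (n+d)| * ((n+d) + 1))) * x)
        ≤ g n * |co a b c (n + d)| * x ^ n * r := by
          exact mul_le_mul_of_nonneg_left hn hbase
      _ = r * (g n * |co a b c (n + d)| * x ^ n) := by ring

include hc in
lemma summable_co' (g : ℕ → ℝ) (hg : ∀ n, 0 < g n)
    (hgr : Tendsto (fun n => g (n + 1) / g n) atTop (𝓝 1)) (d : ℕ) {x : ℝ}
    (hx : |x| < 1) :
    Summable (fun n => g n * co a b c (n + d) * x ^ n) := by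
  refine Summable.of_norm_bounded (summable_co (a := a) (b := b) hc g hg hgr d (abs_nonneg x) hx) fun n => ?_
  rw [Real.norm_eq_abs, abs_mul, abs_mul, abs_pow, abs_of_pos (hg n)]


lemma summable_of_abs_summable {K : ℕ → ℝ} {y : ℝ}
    (h : Summable (fun n : ℕ => ((n:ℝ)+1) * |K n| * |y| ^ n)) :
    Summable (fun n => K n * y ^ n) := by
  refine Summable.of_norm_bounded h fun n => ?_
  rw [Real.norm_eq_abs, abs_mul, abs_pow]
  have hP : 0 ≤ |K n| * |y| ^ n := mul_nonneg (abs_nonneg _) (pow_nonneg (abs_nonneg y) n)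
  have hn : (0:ℝ) ≤ (n:ℝ) := n.cast_nonneg
  calc |K n| * |y| ^ n = 1 * (|K n| * |y| ^ n) := (one_mul _).symm
    _ ≤ ((n:ℝ)+1) * (|K n| * |y| ^ n) := mul_le_mul_of_nonneg_right (by linarith) hP
    _ = ((n:ℝ)+1) * |K n| * |y| ^ n := by ring

lemma hasDerivAt_tsum_pow {K : ℕ → ℝ}
    (hsum : ∀ y : ℝ, 0 ≤ y → y < 1 → Summable (fun n : ℕ => ((n:ℝ)+1) * |K n| * y ^ n))
    {x : ℝ} (hx : |x| < 1) :
    HasDerivAt (fun z => ∑' n, K n * z ^ n) (∑' n : ℕ, ((n:ℝ)+1) * K (n+1) * x ^ n) x := by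
  set ρ : ℝ := (1 + |x|) / 2 with hρdef
  have hρ0 : 0 < ρ := by have := abs_nonneg x; rw [hρdef]; linarith
  have hxρ : |x| < ρ := by rw [hρdef]; linarith
  have hρ1 : ρ < 1 := by rw [hρdef]; linarith
  set u : ℕ → ℝ := fun n : ℕ => ρ⁻¹ * (((n:ℝ)+1) * |K n| * ρ ^ n) with hudef
  have hu : Summable u := (hsum ρ hρ0.le hρ1).mul_left _
  have hbound : ∀ n : ℕ, ∀ y ∈ Set.Ioo (-ρ) ρ, ‖K n * ((n:ℝ) * y ^ (n-1))‖ ≤ u n := by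
    intro n y hy
    have hyρ : |y| ≤ ρ := le_of_lt (abs_lt.mpr ⟨hy.1, hy.2⟩)
    rw [Real.norm_eq_abs, abs_mul, abs_mul, abs_pow]
    cases n with
    | zero =>
      simp only [Nat.cast_zero, zero_mul, mul_zero, abs_zero]
      simp only [hudef]
      positivity
    | succ m =>
      have h1 : |(((m:ℕ)+1 : ℕ) : ℝ)| = (m:ℝ)+1 := by
        rw [abs_of_nonneg] <;> push_cast <;> [rfl; positivity]
      have h2 : u (m+1) = ((m:ℝ)+2) * |K (m+1)| * ρ ^ m := by
        rw [hudef]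
        have : ρ ^ (m+1) = ρ * ρ ^ m := by rw [pow_succ]; ring
        push_cast
        rw [this]
        field_simp
        ring
      rw [h2]
      have h3 : (m+1) - 1 = m := rfl
      rw [h3, h1]
      have h4 : |y| ^ m ≤ ρ ^ m := pow_le_pow_left₀ (abs_nonneg y) hyρ m
      have h5 : (m:ℝ) + 1 ≤ (m:ℝ) + 2 := by linarith
      calc |K (m+1)| * (((m:ℝ)+1) * |y| ^ m)
          ≤ |K (m+1)| * (((m:ℝ)+2) * ρ ^ m) := by
            refine mul_le_mul_of_nonneg_left ?_ (abs_nonneg _)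
            have i1 : ((m:ℝ)+1) * |y| ^ m ≤ ((m:ℝ)+1) * ρ ^ m :=
              mul_le_mul_of_nonneg_left h4 (by positivity)
            have i2 : ((m:ℝ)+1) * ρ ^ m ≤ ((m:ℝ)+2) * ρ ^ m :=
              mul_le_mul_of_nonneg_right h5 (pow_nonneg hρ0.le m)
            linarith
        _ = ((m:ℝ)+2) * |K (m+1)| * ρ ^ m := by ring
  have hmem : x ∈ Set.Ioo (-ρ) ρ := by constructor <;> [linarith [neg_abs_le x]; linarith [le_abs_self x]]
  have h0mem : (0:ℝ) ∈ Set.Ioo (-ρ) ρ := ⟨by linarith, hρ0⟩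
  have hder := hasDerivAt_tsum_of_isPreconnected hu isOpen_Ioo (convex_Ioo (-ρ) ρ).isPreconnected
    (fun n y _ => (hasDerivAt_pow n y).const_mul (K n))
    hbound h0mem (summable_of_abs_summable (by simpa using hsum 0 le_rfl one_pos)) hmem
  have hs : Summable (fun n => K n * ((n:ℝ) * x ^ (n-1))) :=
    Summable.of_norm_bounded hu fun n => hbound n x hmem
  have heq : ∑' n, K n * ((n:ℝ) * x ^ (n-1)) = ∑' n : ℕ, ((n:ℝ)+1) * K (n+1) * x ^ n := by
    rw [Summable.tsum_eq_zero_add hs]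
    simp only [Nat.cast_zero, zero_mul, mul_zero, zero_add, Nat.add_sub_cancel]
    refine tsum_congr fun n => ?_
    push_cast
    ring
  rw [← heq]
  exact hder

noncomputable def Gs (a b c x : ℝ) : ℝ := ∑' n : ℕ, ((n:ℝ)+1) * co a b c (n+1) * x ^ n
noncomputable def Hs (a b c x : ℝ) : ℝ :=
  ∑' n : ℕ, (((n:ℝ)+1) * ((n:ℝ)+2)) * co a b c (n+2) * x ^ n

include hc in
lemma sumAbsLin (d : ℕ) {y : ℝ} (h0 : 0 ≤ y) (h1 : y < 1) :
    Summable (fun n : ℕ => ((n:ℝ)+1) * |co a b c (n+d)| * y ^ n) := by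
  have hgr : Tendsto (fun n : ℕ => (((n+1:ℕ):ℝ)+1) / ((n:ℝ)+1)) atTop (𝓝 1) := by
    refine (tendsto_ratio_aux 2 1).congr fun n => ?_
    push_cast; ring_nf
  exact summable_co (a := a) (b := b) hc (fun n : ℕ => (n:ℝ)+1)
    (fun n => by positivity) hgr d h0 h1

include hc in
lemma sumAbsQuad (d : ℕ) {y : ℝ} (h0 : 0 ≤ y) (h1 : y < 1) :
    Summable (fun n : ℕ => (((n:ℝ)+1) * ((n:ℝ)+2)) * |co a b c (n+d)| * y ^ n) := by
  have hgr : Tendsto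
      (fun n : ℕ => ((((n+1:ℕ):ℝ)+1) * (((n+1:ℕ):ℝ)+2)) / (((n:ℝ)+1) * ((n:ℝ)+2)))
      atTop (𝓝 1) := by
    have h := (tendsto_ratio_aux 2 1).mul (tendsto_ratio_aux 3 2)
    rw [mul_one] at h
    refine h.congr fun n => ?_
    rw [div_mul_div_comm]
    push_cast; ring_nf
  exact summable_co (a := a) (b := b) hc (fun n : ℕ => ((n:ℝ)+1) * ((n:ℝ)+2))
    (fun n => by positivity) hgr d h0 h1

include hc in
lemma hasSum_F {x : ℝ} (hx : |x| < 1) :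
    HasSum (fun n : ℕ => co a b c n * x ^ n) (hyp2F1 a b c x) := by
  rw [hyp_eq]
  exact (summable_of_abs_summable (by simpa using sumAbsLin hc 0 (abs_nonneg x) hx)).hasSum

include hc in
lemma sumG {x : ℝ} (hx : |x| < 1) :
    Summable (fun n : ℕ => ((n:ℝ)+1) * co a b c (n+1) * x ^ n) := by
  refine Summable.of_norm_bounded (sumAbsQuad (a := a) (b := b) hc 1 (abs_nonneg x) hx)
    fun n => ?_
  rw [Real.norm_eq_abs, abs_mul, abs_mul, abs_pow, abs_of_pos (show (0:ℝ) < (n:ℝ)+1 by positivity)]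
  have h1 : ((n:ℝ)+1) ≤ ((n:ℝ)+1) * ((n:ℝ)+2) := by nlinarith [(n.cast_nonneg : (0:ℝ) ≤ n)]
  exact mul_le_mul_of_nonneg_right (mul_le_mul_of_nonneg_right h1 (abs_nonneg _))
    (pow_nonneg (abs_nonneg x) n)

include hc in
lemma hasSum_G {x : ℝ} (hx : |x| < 1) :
    HasSum (fun n : ℕ => ((n:ℝ)+1) * co a b c (n+1) * x ^ n) (Gs a b c x) :=
  (sumG hc hx).hasSum

include hc in
lemma hasSum_H {x : ℝ} (hx : |x| < 1) :
    HasSum (fun n : ℕ => (((n:ℝ)+1) * ((n:ℝ)+2)) * co a b c (n+2) * x ^ n) (Hs a b c x) := by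
  refine Summable.hasSum ?_
  refine Summable.of_norm_bounded (sumAbsQuad (a := a) (b := b) hc 2 (abs_nonneg x) hx)
    fun n => le_of_eq ?_
  rw [Real.norm_eq_abs, abs_mul, abs_mul, abs_pow,
    abs_of_pos (show (0:ℝ) < ((n:ℝ)+1) * ((n:ℝ)+2) by positivity)]

include hc in
lemma hasSum_xG {x : ℝ} (hx : |x| < 1) :
    HasSum (fun n : ℕ => (n:ℝ) * co a b c n * x ^ n) (x * Gs a b c x) := by
  have h1 := (hasSum_G (a := a) (b := b) hc hx).mul_left x
  have h2 : (fun n : ℕ => x * (((n:ℝ)+1) * co a b c (n+1) * x ^ n))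
      = fun n : ℕ => (((n+1:ℕ)):ℝ) * co a b c (n+1) * x ^ (n+1) := by
    funext n; push_cast; ring
  rw [h2] at h1
  have h3 := (hasSum_nat_add_iff (f := fun n : ℕ => (n:ℝ) * co a b c n * x ^ n) 1).mp h1
  simpa using h3

include hc in
lemma hasSum_xH {x : ℝ} (hx : |x| < 1) :
    HasSum (fun n : ℕ => (n:ℝ) * ((n:ℝ)+1) * co a b c (n+1) * x ^ n) (x * Hs a b c x) := by
  have h1 := (hasSum_H (a := a) (b := b) hc hx).mul_left x
  have h2 : (fun n : ℕ => x * ((((n:ℝ)+1) * ((n:ℝ)+2)) * co a b c (n+2) * x ^ n))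
      = fun n : ℕ => (((n+1:ℕ)):ℝ) * ((((n+1:ℕ)):ℝ)+1) * co a b c ((n+1)+1) * x ^ (n+1) := by
    funext n; push_cast; ring_nf
  rw [h2] at h1
  have h3 := (hasSum_nat_add_iff
    (f := fun n : ℕ => (n:ℝ) * ((n:ℝ)+1) * co a b c (n+1) * x ^ n) 1).mp h1
  simpa using h3

include hc in
lemma hasSum_x2H {x : ℝ} (hx : |x| < 1) :
    HasSum (fun n : ℕ => (n:ℝ) * ((n:ℝ)-1) * co a b c n * x ^ n) (x ^ 2 * Hs a b c x) := by
  have h1 := (hasSum_H (a := a) (b := b) hc hx).mul_left (x ^ 2)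
  have h2 : (fun n : ℕ => x ^ 2 * ((((n:ℝ)+1) * ((n:ℝ)+2)) * co a b c (n+2) * x ^ n))
      = fun n : ℕ => (((n+2:ℕ)):ℝ) * ((((n+2:ℕ)):ℝ)-1) * co a b c (n+2) * x ^ (n+2) := by
    funext n; push_cast; ring_nf
  rw [h2] at h1
  have h3 := (hasSum_nat_add_iff
    (f := fun n : ℕ => (n:ℝ) * ((n:ℝ)-1) * co a b c n * x ^ n) 2).mp h1
  simpa [Finset.sum_range_succ] using h3

include hc in
lemma F_ode {x : ℝ} (hx : |x| < 1) :
    3*x*(1-x) * Hs a b c x + (3*c - 3*(a+b+1)*x) * Gs a b c x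
      - 3*(a*b) * hyp2F1 a b c x = 0 := by
  have hF := hasSum_F (a := a) (b := b) hc (x := x) hx
  have hG := hasSum_G (a := a) (b := b) hc (x := x) hx
  have hxG := hasSum_xG (a := a) (b := b) hc (x := x) hx
  have hxH := hasSum_xH (a := a) (b := b) hc (x := x) hx
  have hx2H := hasSum_x2H (a := a) (b := b) hc (x := x) hx
  have S := (((hxH.mul_left 3).sub (hx2H.mul_left 3)).add
    ((hG.mul_left (3*c)).sub (hxG.mul_left (3*(a+b+1))))).sub (hF.mul_left (3*(a*b)))
  have hzero : (fun n : ℕ =>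
      3 * ((n:ℝ) * ((n:ℝ)+1) * co a b c (n+1) * x ^ n)
        - 3 * ((n:ℝ) * ((n:ℝ)-1) * co a b c n * x ^ n)
      + (3*c * (((n:ℝ)+1) * co a b c (n+1) * x ^ n)
        - 3*(a+b+1) * ((n:ℝ) * co a b c n * x ^ n))
      - 3*(a*b) * (co a b c n * x ^ n)) = fun _ : ℕ => (0:ℝ) := by
    funext n
    have h := co_rec (a := a) (b := b) hc n
    linear_combination (3 * x ^ n) * h
  rw [hzero] at S
  have hval := S.unique hasSum_zero
  linear_combination hval

lemma hyp_at_zero (a b c : ℝ) : hyp2F1 a b c 0 = 1 := by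
  rw [hyp_eq]
  rw [tsum_eq_single 0 (fun n hn => by simp [zero_pow hn])]
  simp [co]

include hc in
lemma hasDerivAt_F {x : ℝ} (hx : |x| < 1) :
    HasDerivAt (fun z => hyp2F1 a b c z) (Gs a b c x) x := by
  have h := hasDerivAt_tsum_pow (K := co a b c)
    (fun y h0 h1 => by simpa using sumAbsLin (a := a) (b := b) hc 0 h0 h1) hx
  have hfun : (fun z : ℝ => ∑' n : ℕ, co a b c n * z ^ n) = fun z => hyp2F1 a b c z := by
    funext z; rw [hyp_eq]
  have hval : (∑' n : ℕ, ((n:ℝ)+1) * co a b c (n+1) * x ^ n) = Gs a b c x := rfl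
  rw [hfun, hval] at h
  exact h

include hc in
lemma hasDerivAt_Gs {x : ℝ} (hx : |x| < 1) :
    HasDerivAt (fun z => Gs a b c z) (Hs a b c x) x := by
  have hsum : ∀ y : ℝ, 0 ≤ y → y < 1 →
      Summable (fun n : ℕ => ((n:ℝ)+1) * |((n:ℝ)+1) * co a b c (n+1)| * y ^ n) := by
    intro y h0 h1
    refine Summable.of_nonneg_of_le (fun n => by positivity) (fun n => ?_)
      (sumAbsQuad (a := a) (b := b) hc 1 h0 h1)
    rw [abs_mul, abs_of_pos (show (0:ℝ) < (n:ℝ)+1 by positivity)]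
    have h1' : ((n:ℝ)+1) * (((n:ℝ)+1) * |co a b c (n+1)|)
        ≤ (((n:ℝ)+1) * ((n:ℝ)+2)) * |co a b c (n+1)| := by
      nlinarith [abs_nonneg (co a b c (n+1)), (n.cast_nonneg : (0:ℝ) ≤ n)]
    exact mul_le_mul_of_nonneg_right h1' (pow_nonneg h0 n)
  have h := hasDerivAt_tsum_pow (K := fun n : ℕ => ((n:ℝ)+1) * co a b c (n+1)) hsum hx
  have hfun : (fun z : ℝ => ∑' n : ℕ, (((n:ℝ)+1) * co a b c (n+1)) * z ^ n)
      = fun z => Gs a b c z := by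
    funext z; rw [Gs]
  rw [hfun] at h
  convert h using 1
  rw [Hs]
  refine tsum_congr fun n => ?_
  push_cast
  ring

end Hyp


open Filter Topology

/-- `h₂(x) = x^{1/6−b̂} ₂F₁(1/6−b̂, 1/2−b̂, 1−2b̂; x)` (when `1−2b̂` is not a
nonpositive integer) solves `−2b h + 2x(1−2x) h′ + 3x²(1−x) h″ = 0` on `(0,1)`,
blows up to `+∞` as `x → 0⁺`, while `h₁(x) = x^{1/6+b̂} ₂F₁(1/6+b̂,1/2+b̂,1+2b̂;x)`
tends to `0` as `x → 0⁺`. -/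
theorem h2_solves_ODE_and_limits (b : ℝ) (hb : 0 < b)
    (hnotint : ∀ n : ℕ, 1 - 2 * (Real.sqrt (1 + 24 * b) / 6) ≠ -(n : ℝ)) :
    let bhat : ℝ := Real.sqrt (1 + 24 * b) / 6
    let h₂ : ℝ → ℝ := fun x =>
      x ^ ((1 : ℝ) / 6 - bhat) * hyp2F1 (1 / 6 - bhat) (1 / 2 - bhat) (1 - 2 * bhat) x
    let h₁ : ℝ → ℝ := fun x =>
      x ^ ((1 : ℝ) / 6 + bhat) * hyp2F1 (1 / 6 + bhat) (1 / 2 + bhat) (1 + 2 * bhat) x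
    (∀ x ∈ Set.Ioo (0 : ℝ) 1,
      -2 * b * h₂ x + 2 * x * (1 - 2 * x) * deriv h₂ x
        + 3 * x ^ 2 * (1 - x) * deriv (deriv h₂) x = 0) ∧
    Filter.Tendsto h₂ (nhdsWithin 0 (Set.Ioi 0)) Filter.atTop ∧
    Filter.Tendsto h₁ (nhdsWithin 0 (Set.Ioi 0)) (nhds 0) := by
  intro bhat h₂ h₁
  have hb0 : (0:ℝ) ≤ 1 + 24 * b := by linarith
  have hbhat : bhat = Real.sqrt (1 + 24 * b) / 6 := rfl
  have hsq : bhat ^ 2 = (1 + 24 * b) / 36 := by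
    rw [hbhat, div_pow, Real.sq_sqrt hb0]; norm_num
  have h1lt : 1 < Real.sqrt (1 + 24 * b) := by
    have h1 : (1:ℝ) = Real.sqrt 1 := Real.sqrt_one.symm
    rw [h1]; exact Real.sqrt_lt_sqrt (by norm_num) (by linarith)
  have hbig : 1/6 < bhat := by rw [hbhat]; linarith
  have hbpos : 0 < bhat := by linarith
  have hC : ∀ n : ℕ, (1 - 2 * bhat) + (n : ℝ) ≠ 0 := by
    intro n h
    apply hnotint n
    rw [← hbhat]
    linarith
  have hsrel : 3 * (1/6 - bhat)^2 - (1/6 - bhat) - 2*b = 0 := by linear_combination 3 * hsq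
  refine ⟨?_, ?_, ?_⟩
  · -- ODE
    intro x hx
    obtain ⟨hx0, hx1⟩ := hx
    have hxne : x ≠ 0 := hx0.ne'
    have hxabs : |x| < 1 := abs_lt.mpr ⟨by linarith, hx1⟩
    have hder : ∀ y ∈ Set.Ioo (0:ℝ) 1, HasDerivAt h₂
        ((1/6 - bhat) * y ^ ((1:ℝ)/6 - bhat - 1) * hyp2F1 (1/6 - bhat) (1/2 - bhat) (1 - 2*bhat) y
          + y ^ ((1:ℝ)/6 - bhat) * Hyp.Gs (1/6 - bhat) (1/2 - bhat) (1 - 2*bhat) y) y := by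
      intro y hy
      have hyabs : |y| < 1 := abs_lt.mpr ⟨by linarith [hy.1], hy.2⟩
      have h1 := Real.hasDerivAt_rpow_const (x := y) (p := (1:ℝ)/6 - bhat) (Or.inl hy.1.ne')
      exact h1.mul (Hyp.hasDerivAt_F (a := 1/6 - bhat) (b := 1/2 - bhat) hC hyabs)
    have hD1 : deriv h₂ x =
        (1/6 - bhat) * x ^ ((1:ℝ)/6 - bhat - 1) * hyp2F1 (1/6 - bhat) (1/2 - bhat) (1 - 2*bhat) x
          + x ^ ((1:ℝ)/6 - bhat) * Hyp.Gs (1/6 - bhat) (1/2 - bhat) (1 - 2*bhat) x :=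
      (hder x ⟨hx0, hx1⟩).deriv
    have hEq : deriv h₂ =ᶠ[𝓝 x] fun y =>
        (1/6 - bhat) * y ^ ((1:ℝ)/6 - bhat - 1) * hyp2F1 (1/6 - bhat) (1/2 - bhat) (1 - 2*bhat) y
          + y ^ ((1:ℝ)/6 - bhat) * Hyp.Gs (1/6 - bhat) (1/2 - bhat) (1 - 2*bhat) y := by
      filter_upwards [isOpen_Ioo.mem_nhds ⟨hx0, hx1⟩] with y hy using (hder y hy).deriv
    have hF := Hyp.hasDerivAt_F (a := 1/6 - bhat) (b := 1/2 - bhat) hC hxabs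
    have hG := Hyp.hasDerivAt_Gs (a := 1/6 - bhat) (b := 1/2 - bhat) hC hxabs
    have hr1 : HasDerivAt (fun y : ℝ => y ^ ((1:ℝ)/6 - bhat - 1))
        (((1:ℝ)/6 - bhat - 1) * x ^ ((1:ℝ)/6 - bhat - 1 - 1)) x :=
      Real.hasDerivAt_rpow_const (Or.inl hxne)
    have hr2 : HasDerivAt (fun y : ℝ => y ^ ((1:ℝ)/6 - bhat))
        (((1:ℝ)/6 - bhat) * x ^ ((1:ℝ)/6 - bhat - 1)) x :=
      Real.hasDerivAt_rpow_const (Or.inl hxne)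
    have hder2 := ((hr1.const_mul ((1:ℝ)/6 - bhat)).mul hF).add (hr2.mul hG)
    have hD2 : deriv (deriv h₂) x =
        (1/6 - bhat) * (((1:ℝ)/6 - bhat - 1) * x ^ ((1:ℝ)/6 - bhat - 1 - 1)) *
            hyp2F1 (1/6 - bhat) (1/2 - bhat) (1 - 2*bhat) x
          + (1/6 - bhat) * x ^ ((1:ℝ)/6 - bhat - 1) *
            Hyp.Gs (1/6 - bhat) (1/2 - bhat) (1 - 2*bhat) x
          + (((1:ℝ)/6 - bhat) * x ^ ((1:ℝ)/6 - bhat - 1) *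
              Hyp.Gs (1/6 - bhat) (1/2 - bhat) (1 - 2*bhat) x
            + x ^ ((1:ℝ)/6 - bhat) * Hyp.Hs (1/6 - bhat) (1/2 - bhat) (1 - 2*bhat) x) := by
      rw [hEq.deriv_eq]
      exact hder2.deriv
    have hh2x : h₂ x =
        x ^ ((1:ℝ)/6 - bhat) * hyp2F1 (1/6 - bhat) (1/2 - bhat) (1 - 2*bhat) x := rfl
    have hode := Hyp.F_ode (a := 1/6 - bhat) (b := 1/2 - bhat) hC hxabs
    have e1 : x ^ ((1:ℝ)/6 - bhat) = x ^ ((1:ℝ)/6 - bhat - 1) * x := by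
      rw [← Real.rpow_add_one hxne]; ring_nf
    have e2 : x ^ ((1:ℝ)/6 - bhat - 1) = x ^ ((1:ℝ)/6 - bhat - 1 - 1) * x := by
      rw [← Real.rpow_add_one hxne]; ring_nf
    rw [hh2x, hD1, hD2, e1, e2]
    linear_combination
      (x ^ ((1:ℝ)/6 - bhat - 1 - 1) * x ^ 2 *
        hyp2F1 (1/6 - bhat) (1/2 - bhat) (1 - 2*bhat) x) * hsrel
      + (x ^ ((1:ℝ)/6 - bhat - 1 - 1) * x ^ 3) * hode
  · -- h₂ → atTop
    have hcont := (Hyp.hasDerivAt_F (a := 1/6 - bhat) (b := 1/2 - bhat) hC (x := 0) (by norm_num)).continuousAt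
    have hFlim : Tendsto (fun z => hyp2F1 (1/6 - bhat) (1/2 - bhat) (1 - 2*bhat) z)
        (𝓝[>] (0:ℝ)) (𝓝 1) := by
      have h2 := hcont.tendsto
      rw [Hyp.hyp_at_zero] at h2
      exact h2.mono_left nhdsWithin_le_nhds
    have hexp : Tendsto (fun z : ℝ => z ^ ((1:ℝ)/6 - bhat)) (𝓝[>] (0:ℝ)) atTop := by
      have hpos : 0 < bhat - 1/6 := by linarith
      have h1 : Tendsto (fun z : ℝ => z⁻¹ ^ (bhat - 1/6)) (𝓝[>] (0:ℝ)) atTop :=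
        (tendsto_rpow_atTop hpos).comp tendsto_inv_nhdsGT_zero
      refine h1.congr' ?_
      filter_upwards [self_mem_nhdsWithin] with z hz
      rw [Real.inv_rpow (le_of_lt hz), ← Real.rpow_neg (le_of_lt hz)]
      congr 1
      ring
    exact hexp.atTop_mul_pos one_pos hFlim
  · -- h₁ → 0
    have hC' : ∀ n : ℕ, (1 + 2 * bhat) + (n : ℝ) ≠ 0 := by
      intro n
      have hn : (0:ℝ) ≤ (n:ℝ) := n.cast_nonneg
      have : (0:ℝ) < (1 + 2 * bhat) + (n : ℝ) := by linarith
      exact this.ne'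
    have hcont' := (Hyp.hasDerivAt_F (a := 1/6 + bhat) (b := 1/2 + bhat) hC' (x := 0) (by norm_num)).continuousAt
    have hFlim' : Tendsto (fun z => hyp2F1 (1/6 + bhat) (1/2 + bhat) (1 + 2*bhat) z)
        (𝓝[>] (0:ℝ)) (𝓝 1) := by
      have h2 := hcont'.tendsto
      rw [Hyp.hyp_at_zero] at h2
      exact h2.mono_left nhdsWithin_le_nhds
    have hexp' : Tendsto (fun z : ℝ => z ^ ((1:ℝ)/6 + bhat)) (𝓝[>] (0:ℝ)) (𝓝 0) := by
      have hpos : 0 < (1:ℝ)/6 + bhat := by linarith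
      have hct : ContinuousAt (fun z : ℝ => z ^ ((1:ℝ)/6 + bhat)) 0 :=
        Real.continuousAt_rpow_const 0 _ (Or.inr hpos.le)
      have h2 := hct.tendsto
      rw [Real.zero_rpow hpos.ne'] at h2
      exact h2.mono_left nhdsWithin_le_nhds
    have h3 := hexp'.mul hFlim'
    have h4 : Tendsto (fun x : ℝ => x ^ ((1:ℝ)/6 + bhat) *
        hyp2F1 (1/6 + bhat) (1/2 + bhat) (1 + 2*bhat) x) (𝓝[>] (0:ℝ)) (𝓝 0) := by
      simpa using h3
    exact h4
end
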